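/- Let (V₀, ω₀), (V₁, ω₁), (V₂, ω₂) be symplectic vector spaces, Λ₀₁ ⊆ V₀ × V₁ a Lagrangian subspace for (−ω₀) ⊕ ω₁, and Λ₁₂ ⊆ V₁ × V₂ a Lagrangian subspace for (−ω₁) ⊕ ω₂. Then, without any transversality assumption, the geometric composition Λ₀₁ ∘ Λ₁₂ := {(v₀, v₂) ∈ V₀ × V₂ : there exists v₁ ∈ V₁ with (v₀,v₁) ∈ Λ₀₁ and (v₁,v₂) ∈ Λ₁₂} is a Lagrangian subspace of (V₀ × V₂, (−ω₀) ⊕ ω₂). -/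

import Mathlib

open LinearMap Submodule

/-- The symplectic complement of a subspace `W` with respect to a bilinear form `ω`. -/
def symplComp {V : Type*} [AddCommGroup V] [Module ℝ V]
    (ω : V →ₗ[ℝ] V →ₗ[ℝ] ℝ) (W : Submodule ℝ V) : Submodule ℝ V where
  carrier := {v | ∀ w ∈ W, ω v w = 0}
  zero_mem' := by intro w _; simp
  add_mem' := by intro a b ha hb w hw; simp [ha w hw, hb w hw]
  smul_mem' := by intro c a ha w hw; simp [ha w hw]

/-- `ω` is a (linear) symplectic form: alternating and nondegenerate. -/
structure IsSymplecticForm {V : Type*} [AddCommGroup V] [Module ℝ V]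
    (ω : V →ₗ[ℝ] V →ₗ[ℝ] ℝ) : Prop where
  alternating : ∀ v, ω v v = 0
  nondeg : ∀ v, (∀ w, ω v w = 0) → v = 0

/-- A subspace is Lagrangian iff it equals its symplectic complement. -/
def IsLagrangian {V : Type*} [AddCommGroup V] [Module ℝ V]
    (ω : V →ₗ[ℝ] V →ₗ[ℝ] ℝ) (Λ : Submodule ℝ V) : Prop :=
  Λ = symplComp ω Λ

/-- The symplectic form `(−ω₀) ⊕ ω₁` on `V₀ × V₁`. -/
def prodFormNegPos {V₀ V₁ : Type*} [AddCommGroup V₀] [Module ℝ V₀]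
    [AddCommGroup V₁] [Module ℝ V₁]
    (ω₀ : V₀ →ₗ[ℝ] V₀ →ₗ[ℝ] ℝ) (ω₁ : V₁ →ₗ[ℝ] V₁ →ₗ[ℝ] ℝ) :
    (V₀ × V₁) →ₗ[ℝ] (V₀ × V₁) →ₗ[ℝ] ℝ :=
  LinearMap.mk₂ ℝ (fun x y => - ω₀ x.1 y.1 + ω₁ x.2 y.2)
    (by intro x x' y
        simp only [Prod.fst_add, Prod.snd_add, map_add, LinearMap.add_apply]; ring)
    (by intro c x y
        simp only [Prod.smul_fst, Prod.smul_snd, map_smul, LinearMap.smul_apply,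
          smul_eq_mul]; ring)
    (by intro x y y'
        simp only [Prod.fst_add, Prod.snd_add, map_add, LinearMap.add_apply]; ring)
    (by intro c x y
        simp only [Prod.smul_fst, Prod.smul_snd, map_smul, LinearMap.smul_apply,
          smul_eq_mul]; ring)

/-- The symplectic form `ω₀₁₁₂ = (−ω₀) ⊕ ω₁ ⊕ (−ω₁) ⊕ ω₂` on `(V₀ × V₁) × (V₁ × V₂)`. -/
def form0112 {V₀ V₁ V₂ : Type*} [AddCommGroup V₀] [Module ℝ V₀]
    [AddCommGroup V₁] [Module ℝ V₁] [AddCommGroup V₂] [Module ℝ V₂]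
    (ω₀ : V₀ →ₗ[ℝ] V₀ →ₗ[ℝ] ℝ) (ω₁ : V₁ →ₗ[ℝ] V₁ →ₗ[ℝ] ℝ)
    (ω₂ : V₂ →ₗ[ℝ] V₂ →ₗ[ℝ] ℝ) :
    ((V₀ × V₁) × (V₁ × V₂)) →ₗ[ℝ] ((V₀ × V₁) × (V₁ × V₂)) →ₗ[ℝ] ℝ :=
  LinearMap.mk₂ ℝ
    (fun x y => - ω₀ x.1.1 y.1.1 + ω₁ x.1.2 y.1.2 - ω₁ x.2.1 y.2.1 + ω₂ x.2.2 y.2.2)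
    (by intro x x' y
        simp only [Prod.fst_add, Prod.snd_add, map_add, LinearMap.add_apply]; ring)
    (by intro c x y
        simp only [Prod.smul_fst, Prod.smul_snd, map_smul, LinearMap.smul_apply,
          smul_eq_mul]; ring)
    (by intro x y y'
        simp only [Prod.fst_add, Prod.snd_add, map_add, LinearMap.add_apply]; ring)
    (by intro c x y
        simp only [Prod.smul_fst, Prod.smul_snd, map_smul, LinearMap.smul_apply,
          smul_eq_mul]; ring)

/-- `K = V₀ × Δ₁ × V₂`, the product of the full spaces with the diagonal of `V₁`. -/
def Kdiag {V₀ V₁ V₂ : Type*} [AddCommGroup V₀] [Module ℝ V₀]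
    [AddCommGroup V₁] [Module ℝ V₁] [AddCommGroup V₂] [Module ℝ V₂] :
    Submodule ℝ ((V₀ × V₁) × (V₁ × V₂)) where
  carrier := {x | x.1.2 = x.2.1}
  zero_mem' := rfl
  add_mem' := by
    intro a b ha hb
    simp only [Set.mem_setOf_eq] at ha hb ⊢
    show a.1.2 + b.1.2 = a.2.1 + b.2.1
    rw [ha, hb]
  smul_mem' := by
    intro c a ha
    simp only [Set.mem_setOf_eq] at ha ⊢
    show c • a.1.2 = c • a.2.1
    rw [ha]

/-- The projection `π₀₂ : V₀ × V₁ × V₁ × V₂ → V₀ × V₂` onto the outer factors. -/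
def proj02 {V₀ V₁ V₂ : Type*} [AddCommGroup V₀] [Module ℝ V₀]
    [AddCommGroup V₁] [Module ℝ V₁] [AddCommGroup V₂] [Module ℝ V₂] :
    ((V₀ × V₁) × (V₁ × V₂)) →ₗ[ℝ] V₀ × V₂ where
  toFun x := (x.1.1, x.2.2)
  map_add' _ _ := rfl
  map_smul' _ _ := rfl


/-! The composition is the linear symplectic reduction of the Lagrangian `Λ₀₁ × Λ₁₂` of
`V₀ × V₁ × V₁ × V₂` by the coisotropic subspace `K = V₀ × Δ₁ × V₂`, whose symplectic complement
`0 × Δ₁ × 0` is the kernel of `proj02 : K → V₀ × V₂`. The reduction of a Lagrangian `Λ` is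
isotropic because `proj02` is symplectic on `K`, and it is coisotropic because
`(Λ ∩ K)^Ω = Λ + K^Ω`: a vector `Ω`-orthogonal to `Λ ∩ K` can be corrected by an element of `K^Ω`,
without changing its image, into an element of `Λ ∩ K`. -/

section SymplecticComplement

variable {V : Type*} [AddCommGroup V] [Module ℝ V] {ω : V →ₗ[ℝ] V →ₗ[ℝ] ℝ}

lemma mem_symplComp_iff {W : Submodule ℝ V} {v : V} : v ∈ symplComp ω W ↔ ∀ w ∈ W, ω v w = 0 :=
  Iff.rfl

lemma symplComp_neg (W : Submodule ℝ V) : symplComp (-ω) W = symplComp ω W := by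
  ext v
  simp only [mem_symplComp_iff, LinearMap.neg_apply, neg_eq_zero]

lemma symplComp_sup (A B : Submodule ℝ V) :
    symplComp ω (A ⊔ B) = symplComp ω A ⊓ symplComp ω B := by
  refine le_antisymm (fun v hv => ⟨fun a ha => hv a (mem_sup_left ha),
    fun b hb => hv b (mem_sup_right hb)⟩) ?_
  rintro v ⟨hvA, hvB⟩ w hw
  obtain ⟨a, ha, b, hb, rfl⟩ := mem_sup.mp hw
  rw [map_add, hvA a ha, hvB b hb, add_zero]

lemma IsLagrangian.neg {Λ : Submodule ℝ V} (h : IsLagrangian ω Λ) : IsLagrangian (-ω) Λ := by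
  rwa [IsLagrangian, symplComp_neg]

namespace IsSymplecticForm

lemma isAlt (h : IsSymplecticForm ω) : ω.IsAlt :=
  h.alternating

lemma neg (h : IsSymplecticForm ω) : IsSymplecticForm (-ω) where
  alternating v := by simp [h.alternating v]
  nondeg v hv := h.nondeg v fun w => by simpa using hv w

lemma nondegenerate (h : IsSymplecticForm ω) : ω.Nondegenerate :=
  h.isAlt.isRefl.nondegenerate_iff_separatingLeft.mpr h.nondeg

lemma symplComp_eq_orthogonal (h : IsSymplecticForm ω) (W : Submodule ℝ V) :
    symplComp ω W = LinearMap.BilinForm.orthogonal ω W := by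
  ext v
  exact forall₂_congr fun w _ => h.isAlt.eq_iff

variable [FiniteDimensional ℝ V]

lemma symplComp_symplComp (h : IsSymplecticForm ω) (W : Submodule ℝ V) :
    symplComp ω (symplComp ω W) = W := by
  simp only [h.symplComp_eq_orthogonal]
  exact LinearMap.BilinForm.orthogonal_orthogonal h.nondegenerate h.isAlt.isRefl W

lemma symplComp_inf (h : IsSymplecticForm ω) (A B : Submodule ℝ V) :
    symplComp ω (A ⊓ B) = symplComp ω A ⊔ symplComp ω B := by
  conv_lhs => rw [← h.symplComp_symplComp A, ← h.symplComp_symplComp B, ← symplComp_sup,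
    h.symplComp_symplComp]

end IsSymplecticForm

end SymplecticComplement

theorem IsLagrangian.map_inf_of_symplComp_le {W U : Type*} [AddCommGroup W] [Module ℝ W]
    [FiniteDimensional ℝ W] [AddCommGroup U] [Module ℝ U] {Ω : W →ₗ[ℝ] W →ₗ[ℝ] ℝ}
    {σ : U →ₗ[ℝ] U →ₗ[ℝ] ℝ} {Λ K : Submodule ℝ W} {π : W →ₗ[ℝ] U}
    (hΛ : IsLagrangian Ω Λ) (hΩ : IsSymplecticForm Ω) (hK : symplComp Ω K ≤ K ⊓ ker π)
    (hπK : ∀ u, ∃ z ∈ K, π z = u) (hσ : ∀ x ∈ K, ∀ y ∈ K, σ (π x) (π y) = Ω x y) :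
    IsLagrangian σ ((Λ ⊓ K).map π) := by
  refine le_antisymm ?_ fun c hc => ?_
  · rintro _ ⟨x, hx, rfl⟩ _ ⟨y, hy, rfl⟩
    rw [hσ x hx.2 y hy.2]
    exact (hΛ ▸ hx.1 : x ∈ symplComp Ω Λ) y hy.1
  · obtain ⟨z, hzK, rfl⟩ := hπK c
    have hz : z ∈ symplComp Ω (Λ ⊓ K) := fun x hx => by
      rw [← hσ z hzK x hx.2]
      exact hc _ (mem_map_of_mem hx)
    rw [hΩ.symplComp_inf, ← hΛ] at hz
    obtain ⟨l, hl, k, hk, rfl⟩ := mem_sup.mp hz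
    obtain ⟨hkK, hkπ⟩ := hK hk
    refine ⟨l, ⟨hl, (K.add_mem_iff_left hkK).mp hzK⟩, ?_⟩
    rw [map_add, mem_ker.mp hkπ, add_zero]

section ProductForm

variable {V₀ V₁ : Type*} [AddCommGroup V₀] [Module ℝ V₀] [AddCommGroup V₁] [Module ℝ V₁]
  {ω₀ : V₀ →ₗ[ℝ] V₀ →ₗ[ℝ] ℝ} {ω₁ : V₁ →ₗ[ℝ] V₁ →ₗ[ℝ] ℝ}

@[simp]
lemma prodFormNegPos_apply (x y : V₀ × V₁) :
    prodFormNegPos ω₀ ω₁ x y = -ω₀ x.1 y.1 + ω₁ x.2 y.2 :=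
  rfl

lemma IsSymplecticForm.prodFormNegPos (h₀ : IsSymplecticForm ω₀) (h₁ : IsSymplecticForm ω₁) :
    IsSymplecticForm (prodFormNegPos ω₀ ω₁) where
  alternating v := by simp [h₀.alternating, h₁.alternating]
  nondeg v hv := Prod.ext (h₀.nondeg _ fun w => by simpa using hv (w, 0))
    (h₁.nondeg _ fun w => by simpa using hv (0, w))

lemma symplComp_prod (L₀ : Submodule ℝ V₀) (L₁ : Submodule ℝ V₁) :
    symplComp (prodFormNegPos ω₀ ω₁) (L₀.prod L₁) = (symplComp ω₀ L₀).prod (symplComp ω₁ L₁) := by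
  ext x
  simp only [mem_prod, mem_symplComp_iff, prodFormNegPos_apply]
  refine ⟨fun hx => ⟨fun w hw => ?_, fun w hw => ?_⟩, fun ⟨hx₀, hx₁⟩ w hw => ?_⟩
  · simpa using hx (w, 0) ⟨hw, zero_mem _⟩
  · simpa using hx (0, w) ⟨zero_mem _, hw⟩
  · rw [hx₀ w.1 hw.1, hx₁ w.2 hw.2, neg_zero, add_zero]

lemma IsLagrangian.prod {L₀ : Submodule ℝ V₀} {L₁ : Submodule ℝ V₁} (h₀ : IsLagrangian ω₀ L₀)
    (h₁ : IsLagrangian ω₁ L₁) : IsLagrangian (prodFormNegPos ω₀ ω₁) (L₀.prod L₁) := by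
  rw [IsLagrangian, symplComp_prod, ← h₀, ← h₁]

end ProductForm

section Composition

variable {V₀ V₁ V₂ : Type*} [AddCommGroup V₀] [Module ℝ V₀] [AddCommGroup V₁] [Module ℝ V₁]
  [AddCommGroup V₂] [Module ℝ V₂]
  {ω₀ : V₀ →ₗ[ℝ] V₀ →ₗ[ℝ] ℝ} {ω₁ : V₁ →ₗ[ℝ] V₁ →ₗ[ℝ] ℝ} {ω₂ : V₂ →ₗ[ℝ] V₂ →ₗ[ℝ] ℝ}

@[simp]
lemma form0112_apply (x y : (V₀ × V₁) × (V₁ × V₂)) :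
    form0112 ω₀ ω₁ ω₂ x y
      = -ω₀ x.1.1 y.1.1 + ω₁ x.1.2 y.1.2 - ω₁ x.2.1 y.2.1 + ω₂ x.2.2 y.2.2 :=
  rfl

lemma form0112_eq_prodFormNegPos :
    form0112 ω₀ ω₁ ω₂ = prodFormNegPos (-prodFormNegPos ω₀ ω₁) (prodFormNegPos ω₁ ω₂) := by
  refine LinearMap.ext₂ fun x y => ?_
  simp only [form0112_apply, prodFormNegPos_apply, LinearMap.neg_apply]
  ring

lemma mem_Kdiag {x : (V₀ × V₁) × (V₁ × V₂)} : x ∈ Kdiag ↔ x.1.2 = x.2.1 :=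
  Iff.rfl

lemma symplComp_Kdiag_le (h₀ : IsSymplecticForm ω₀) (h₁ : IsSymplecticForm ω₁)
    (h₂ : IsSymplecticForm ω₂) : symplComp (form0112 ω₀ ω₁ ω₂) Kdiag ≤ Kdiag ⊓ ker proj02 := by
  intro z hz
  have hz₀ : z.1.1 = 0 := h₀.nondeg _ fun w => by simpa using hz ((w, 0), (0, 0)) rfl
  have hz₂ : z.2.2 = 0 := h₂.nondeg _ fun w => by simpa using hz ((0, 0), (0, w)) rfl
  have hz₁ : z.1.2 - z.2.1 = 0 := h₁.nondeg _ fun w => by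
    simpa [sub_eq_add_neg] using hz ((0, w), (w, 0)) rfl
  exact ⟨sub_eq_zero.mp hz₁, mem_ker.mpr (Prod.ext hz₀ hz₂)⟩

lemma prodFormNegPos_proj02 {x y : (V₀ × V₁) × (V₁ × V₂)} (hx : x ∈ Kdiag) (hy : y ∈ Kdiag) :
    prodFormNegPos ω₀ ω₂ (proj02 x) (proj02 y) = form0112 ω₀ ω₁ ω₂ x y := by
  rw [form0112_apply, mem_Kdiag.mp hx, mem_Kdiag.mp hy, add_sub_cancel_right]
  rfl

lemma coe_map_proj02_prod_inf_Kdiag (Λ₀₁ : Submodule ℝ (V₀ × V₁)) (Λ₁₂ : Submodule ℝ (V₁ × V₂)) :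
    ((Λ₀₁.prod Λ₁₂ ⊓ Kdiag).map proj02 : Set (V₀ × V₂))
      = {p | ∃ v₁, (p.1, v₁) ∈ Λ₀₁ ∧ (v₁, p.2) ∈ Λ₁₂} := by
  ext p
  constructor
  · rintro ⟨⟨⟨v₀, v₁⟩, ⟨v₁', v₂⟩⟩, ⟨⟨h₀₁, h₁₂⟩, hK : v₁ = v₁'⟩, rfl⟩
    subst hK
    exact ⟨v₁, h₀₁, h₁₂⟩
  · rintro ⟨v₁, h₀₁, h₁₂⟩
    exact ⟨((p.1, v₁), (v₁, p.2)), ⟨⟨h₀₁, h₁₂⟩, rfl⟩, rfl⟩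

end Composition

theorem statement6 {V₀ V₁ V₂ : Type*}
    [AddCommGroup V₀] [Module ℝ V₀] [FiniteDimensional ℝ V₀]
    [AddCommGroup V₁] [Module ℝ V₁] [FiniteDimensional ℝ V₁]
    [AddCommGroup V₂] [Module ℝ V₂] [FiniteDimensional ℝ V₂]
    (ω₀ : V₀ →ₗ[ℝ] V₀ →ₗ[ℝ] ℝ) (ω₁ : V₁ →ₗ[ℝ] V₁ →ₗ[ℝ] ℝ) (ω₂ : V₂ →ₗ[ℝ] V₂ →ₗ[ℝ] ℝ)
    (hω₀ : IsSymplecticForm ω₀) (hω₁ : IsSymplecticForm ω₁) (hω₂ : IsSymplecticForm ω₂)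
    (Λ₀₁ : Submodule ℝ (V₀ × V₁)) (Λ₁₂ : Submodule ℝ (V₁ × V₂))
    (hΛ₀₁ : IsLagrangian (prodFormNegPos ω₀ ω₁) Λ₀₁)
    (hΛ₁₂ : IsLagrangian (prodFormNegPos ω₁ ω₂) Λ₁₂) :
    (↑(Submodule.map proj02 (Λ₀₁.prod Λ₁₂ ⊓ Kdiag)) : Set (V₀ × V₂))
        = {p : V₀ × V₂ | ∃ v₁ : V₁, (p.1, v₁) ∈ Λ₀₁ ∧ (v₁, p.2) ∈ Λ₁₂} ∧
    IsLagrangian (prodFormNegPos ω₀ ω₂)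
      (Submodule.map proj02 (Λ₀₁.prod Λ₁₂ ⊓ Kdiag)) := by
  refine ⟨coe_map_proj02_prod_inf_Kdiag Λ₀₁ Λ₁₂, ?_⟩
  have hΩ : IsSymplecticForm (form0112 ω₀ ω₁ ω₂) := by
    rw [form0112_eq_prodFormNegPos]
    exact (hω₀.prodFormNegPos hω₁).neg.prodFormNegPos (hω₁.prodFormNegPos hω₂)
  have hΛ : IsLagrangian (form0112 ω₀ ω₁ ω₂) (Λ₀₁.prod Λ₁₂) := by
    rw [form0112_eq_prodFormNegPos]
    exact hΛ₀₁.neg.prod hΛ₁₂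
  exact hΛ.map_inf_of_symplComp_le hΩ (symplComp_Kdiag_le hω₀ hω₁ hω₂)
    (fun c => ⟨((c.1, 0), (0, c.2)), rfl, rfl⟩) fun x hx y hy => prodFormNegPos_proj02 hx hy
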